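/- Let E, Γ be finite index sets, A ∈ {0,1}^{E×Γ}, and (Θ_e)_{e∈E} square-integrable random variables with diagonal covariance matrix K (so K_{ee} = Var(Θ_e) ≥ 0 and off-diagonal entries zero). Suppose b = AᵀΘ satisfies E[b_i] = E[b_j] for all i, j ∈ Γ. Then for all paths i, j, p ∈ Γ: E[(b_p − b_i)(b_i − b_j)] = −∑_{e∈i, e∉j∪p} K_{ee} − ∑_{e∈j∩p, e∉i} K_{ee} ≤ 0, where 'e ∈ γ' means A_{eγ} = 1. -/

import Mathlib

/-!
Write `c = A_p - A_i` and `d = A_i - A_j` for the link coefficients. Equal mean delays make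
`b_p - b_i = ∑ c_e Θ_e` centred, so the expectation of the product is the covariance of two
linear combinations of the `Θ_e`; as these are uncorrelated it equals `∑ c_e d_e Var Θ_e`.
For 0/1 incidences `c_e d_e ∈ {0, -1}`, and it is `-1` exactly on the two families of links
in the formula, so the sum is minus a sum of variances.
-/

open MeasureTheory Finset ProbabilityTheory

section LinearCombination

variable {Ω E : Type*} [MeasurableSpace Ω] {μ : Measure Ω} [Fintype E] {Θ : E → Ω → ℝ}

lemma integral_mul_eq_covariance_of_integral_eq_zero [IsProbabilityMeasure μ] {X Y : Ω → ℝ}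
    (hX : MemLp X 2 μ) (hY : MemLp Y 2 μ) (h : μ[X] = 0) :
    ∫ ω, X ω * Y ω ∂μ = cov[X, Y; μ] := by
  rw [covariance_eq_sub hX hY, h, zero_mul, sub_zero]
  rfl

lemma memLp_linComb (hΘ : ∀ e, MemLp (Θ e) 2 μ) (c : E → ℝ) :
    MemLp (fun ω ↦ ∑ e, c e * Θ e ω) 2 μ :=
  memLp_finsetSum _ fun e _ ↦ (hΘ e).const_mul (c e)

lemma covariance_linComb_linComb [IsFiniteMeasure μ] (hΘ : ∀ e, MemLp (Θ e) 2 μ)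
    (hΘcov : Pairwise fun e l ↦ cov[Θ e, Θ l; μ] = 0) (c d : E → ℝ) :
    cov[fun ω ↦ ∑ e, c e * Θ e ω, fun ω ↦ ∑ e, d e * Θ e ω; μ]
      = ∑ e, c e * d e * cov[Θ e, Θ e; μ] := by
  rw [covariance_fun_sum_fun_sum (fun e ↦ (hΘ e).const_mul (c e))
    (fun e ↦ (hΘ e).const_mul (d e))]
  refine sum_congr rfl fun e _ ↦ ?_
  rw [Fintype.sum_eq_single e fun l hle ↦ by
    rw [covariance_const_mul_left, covariance_const_mul_right, hΘcov hle.symm, mul_zero,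
      mul_zero]]
  rw [covariance_const_mul_left, covariance_const_mul_right, mul_assoc]

end LinearCombination

lemma sub_mul_sub_eq_of_zero_or_one {a b c : ℝ} (ha : a = 0 ∨ a = 1) (hb : b = 0 ∨ b = 1)
    (hc : c = 0 ∨ c = 1) :
    (c - a) * (a - b) =
      -(if a = 1 ∧ b = 0 ∧ c = 0 then 1 else 0) - (if b = 1 ∧ c = 1 ∧ a = 0 then 1 else 0) := by
  rcases ha with rfl | rfl <;> rcases hb with rfl | rfl <;> rcases hc with rfl | rfl <;> norm_num

open Classical in
lemma sum_sub_mul_sub_mul_eq_of_zero_or_one {E Γ : Type*} [Fintype E] (A : E → Γ → ℝ)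
    (hA : ∀ e γ, A e γ = 0 ∨ A e γ = 1) (v : E → ℝ) (i j p : Γ) :
    ∑ e, (A e p - A e i) * (A e i - A e j) * v e =
      -(∑ e ∈ univ.filter (fun e ↦ A e i = 1 ∧ A e j = 0 ∧ A e p = 0), v e)
        - ∑ e ∈ univ.filter (fun e ↦ A e j = 1 ∧ A e p = 1 ∧ A e i = 0), v e := by
  simp_rw [sub_mul_sub_eq_of_zero_or_one (hA _ i) (hA _ j) (hA _ p), sub_mul, neg_mul, ite_mul,
    one_mul, zero_mul, sum_sub_distrib, sum_neg_distrib, ← sum_filter]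

open Classical in
theorem stmt_10_general {Ω : Type*} [MeasurableSpace Ω] (μ : Measure Ω) [IsProbabilityMeasure μ]
    {E Γ : Type*} [Fintype E]
    (A : E → Γ → ℝ) (hA : ∀ e p, A e p = 0 ∨ A e p = 1)
    (Θ : E → Ω → ℝ) (hΘ : ∀ e, MemLp (Θ e) 2 μ)
    (K : E → E → ℝ)
    (hK : ∀ e l, K e l = (∫ x, Θ e x * Θ l x ∂μ) - (∫ x, Θ e x ∂μ) * (∫ x, Θ l x ∂μ))
    (hdiag : ∀ e l, e ≠ l → K e l = 0)
    (b : Γ → Ω → ℝ) (hb : ∀ p x, b p x = ∑ e, A e p * Θ e x)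
    (hmean : ∀ i j : Γ, ∫ x, b i x ∂μ = ∫ x, b j x ∂μ) :
    ∀ i j p : Γ,
      (∫ x, (b p x - b i x) * (b i x - b j x) ∂μ) =
        -(∑ e ∈ Finset.univ.filter (fun e => A e i = 1 ∧ A e j = 0 ∧ A e p = 0), K e e)
        - ∑ e ∈ Finset.univ.filter (fun e => A e j = 1 ∧ A e p = 1 ∧ A e i = 0), K e e ∧
      (∫ x, (b p x - b i x) * (b i x - b j x) ∂μ) ≤ 0 := by
  intro i j p
  have hKcov : ∀ e l, K e l = cov[Θ e, Θ l; μ] := fun e l ↦ by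
    rw [hK, covariance_eq_sub (hΘ e) (hΘ l)]
    rfl
  have hcentered : ∫ x, ∑ e, (A e p - A e i) * Θ e x ∂μ = 0 := by
    have hint γ := (memLp_linComb hΘ (A · γ)).integrable one_le_two
    simp only [sub_mul, sum_sub_distrib]
    rw [integral_sub (hint p) (hint i), sub_eq_zero]
    simpa only [hb] using hmean p i
  have hformula : ∫ x, (b p x - b i x) * (b i x - b j x) ∂μ
      = ∑ e, (A e p - A e i) * (A e i - A e j) * K e e := by
    simp only [hb, ← sum_sub_distrib, ← sub_mul]
    rw [integral_mul_eq_covariance_of_integral_eq_zero (memLp_linComb hΘ _)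
      (memLp_linComb hΘ _) hcentered,
      covariance_linComb_linComb hΘ fun e l hel ↦ (hKcov e l).symm.trans (hdiag e l hel)]
    simp only [hKcov]
  rw [hformula, sum_sub_mul_sub_mul_eq_of_zero_or_one A hA]
  refine ⟨rfl, ?_⟩
  have hKnonneg : ∀ e, 0 ≤ K e e := fun e ↦ by
    rw [hKcov, covariance_self (hΘ e).aestronglyMeasurable.aemeasurable]
    exact variance_nonneg _ _
  have hsum_nonneg (s : Finset E) : 0 ≤ ∑ e ∈ s, K e e := sum_nonneg fun e _ ↦ hKnonneg e
  exact sub_nonpos.2 ((neg_nonpos.2 (hsum_nonneg _)).trans (hsum_nonneg _))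

open Classical in
/-- Key computation in the proof of the general sufficient condition for optimality:
with equal expected path delays and uncorrelated link states, the correlation of
pairwise path-delay differences is nonpositive. -/
theorem stmt_10 {Ω : Type*} [MeasurableSpace Ω] (μ : Measure Ω) [IsProbabilityMeasure μ]
    {E Γ : Type*} [Fintype E] [Fintype Γ] [DecidableEq E]
    (A : E → Γ → ℝ) (hA : ∀ e p, A e p = 0 ∨ A e p = 1)
    (Θ : E → Ω → ℝ) (hΘ : ∀ e, MemLp (Θ e) 2 μ)
    (K : E → E → ℝ)
    (hK : ∀ e l, K e l = (∫ x, Θ e x * Θ l x ∂μ) - (∫ x, Θ e x ∂μ) * (∫ x, Θ l x ∂μ))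
    (hdiag : ∀ e l, e ≠ l → K e l = 0)
    (b : Γ → Ω → ℝ) (hb : ∀ p x, b p x = ∑ e, A e p * Θ e x)
    (hmean : ∀ i j : Γ, ∫ x, b i x ∂μ = ∫ x, b j x ∂μ) :
    ∀ i j p : Γ,
      (∫ x, (b p x - b i x) * (b i x - b j x) ∂μ) =
        -(∑ e ∈ Finset.univ.filter (fun e => A e i = 1 ∧ A e j = 0 ∧ A e p = 0), K e e)
        - ∑ e ∈ Finset.univ.filter (fun e => A e j = 1 ∧ A e p = 1 ∧ A e i = 0), K e e ∧
      (∫ x, (b p x - b i x) * (b i x - b j x) ∂μ) ≤ 0 :=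
  stmt_10_general μ A hA Θ hΘ K hK hdiag b hb hmean
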